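/- (Matrix Hölder inequality for sequences, positive semidefinite case.) Let A_1, …, A_m and B_1, …, B_m be positive semidefinite complex d×d matrices and let p, q be real numbers with p, q > 1 and 1/p + 1/q = 1. Then Tr[Σ_{i=1}^m A_i B_i] ≤ (Tr[Σ_{i=1}^m A_i^p])^{1/p} · (Tr[Σ_{i=1}^m B_i^q])^{1/q}. -/

import Mathlib

open Matrix
open scoped Kronecker Classical ComplexOrder

noncomputable section

/-- The qubit depolarizing channel `Δ_ρ(φ) = ρ·φ + (1-ρ)·Tr[φ]·I/2`. -/
def delta (ρ : ℝ) (φ : Matrix (Fin 2) (Fin 2) ℂ) : Matrix (Fin 2) (Fin 2) ℂ :=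
  (ρ : ℂ) • φ + (((1 - ρ : ℝ) : ℂ) * φ.trace / 2) • (1 : Matrix (Fin 2) (Fin 2) ℂ)

/-- `Δ_ρ^{⊗n}`, the n-fold tensor power of the depolarizing channel on n qubits. -/
def deltaPow (ρ : ℝ) (n : ℕ) (M : Matrix (Fin n → Fin 2) (Fin n → Fin 2) ℂ) :
    Matrix (Fin n → Fin 2) (Fin n → Fin 2) ℂ :=
  Matrix.of fun x y => ∑ a : Fin n → Fin 2, ∑ b : Fin n → Fin 2,
    M a b * ∏ i : Fin n, delta ρ (Matrix.single (a i) (b i) 1) (x i) (y i)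

/-- The tensor product `L1 ⊗ L2` of two (linear) maps on matrix spaces. -/
def lmTensor {I I' J J' : Type*} [Fintype I] [DecidableEq I]
    (L1 : Matrix I I ℂ → Matrix I' I' ℂ) (L2 : Matrix J J ℂ → Matrix J' J' ℂ)
    (M : Matrix (I × J) (I × J) ℂ) : Matrix (I' × J') (I' × J') ℂ :=
  Matrix.of fun p q => ∑ a : I, ∑ b : I,
    L1 (Matrix.single a b 1) p.1 q.1 *
      L2 (Matrix.of fun j j' => M (a, j) (b, j')) p.2 q.2

/-- Application of a single-qubit (linear) map `L` to the `k`-th qubit of an `N`-qubit register,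
i.e. `id ⊗ ... ⊗ L ⊗ ... ⊗ id`. -/
def applyAt {N : ℕ} (k : Fin N) (L : Matrix (Fin 2) (Fin 2) ℂ → Matrix (Fin 2) (Fin 2) ℂ)
    (M : Matrix (Fin N → Fin 2) (Fin N → Fin 2) ℂ) :
    Matrix (Fin N → Fin 2) (Fin N → Fin 2) ℂ :=
  Matrix.of fun x y => ∑ a : Fin 2, ∑ b : Fin 2,
    L (Matrix.single a b 1) (x k) (y k) *
      M (Function.update x k a) (Function.update y k b)

/-- The EPR state `|Φ⟩⟨Φ|` with `|Φ⟩ = (|00⟩+|11⟩)/√2`, as a bipartite 4×4 density matrix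
(first tensor factor is Alice's qubit, the second is Bob's). -/
def EPR : Matrix (Fin 2 × Fin 2) (Fin 2 × Fin 2) ℂ :=
  Matrix.of fun p q => if p.1 = p.2 ∧ q.1 = q.2 then (1 / 2 : ℂ) else 0

/-- `Φ^{⊗n}`: n EPR pairs as a bipartite state, with the first factor holding Alice's
n qubits and the second factor holding Bob's n qubits. -/
def eprPow (n : ℕ) :
    Matrix ((Fin n → Fin 2) × (Fin n → Fin 2)) ((Fin n → Fin 2) × (Fin n → Fin 2)) ℂ :=
  Matrix.of fun p q => ∏ i : Fin n, EPR (p.1 i, p.2 i) (q.1 i, q.2 i)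

/-- The ρ-isotropic state `Φ_ρ = (Δ_ρ ⊗ id)(Φ)`. -/
def iso (ρ : ℝ) : Matrix (Fin 2 × Fin 2) (Fin 2 × Fin 2) ℂ :=
  lmTensor (delta ρ) id EPR

/-- `Φ_ρ^{⊗n}`: n isotropic states as a bipartite state, with the first factor holding
Alice's n qubits and the second factor holding Bob's n qubits. -/
def isoPow (ρ : ℝ) (n : ℕ) :
    Matrix ((Fin n → Fin 2) × (Fin n → Fin 2)) ((Fin n → Fin 2) × (Fin n → Fin 2)) ℂ :=
  Matrix.of fun p q => ∏ i : Fin n, iso ρ (p.1 i, p.2 i) (q.1 i, q.2 i)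

/-- `|A| = √(Aᴴ A)`. -/
def matAbs {I : Type*} [Fintype I] [DecidableEq I] (A : Matrix I I ℂ) : Matrix I I ℂ :=
  (Matrix.posSemidef_conjTranspose_mul_self A).1.eigenvectorUnitary.1 *
    Matrix.diagonal ((↑) ∘ (√·) ∘ (Matrix.posSemidef_conjTranspose_mul_self A).1.eigenvalues) *
    (star (Matrix.posSemidef_conjTranspose_mul_self A).1.eigenvectorUnitary : Matrix I I ℂ)

/-- Real power `A^r` of a Hermitian matrix, via the functional calculus
(junk value `0` on non-Hermitian matrices). -/
def mpow {I : Type*} [Fintype I] [DecidableEq I] (A : Matrix I I ℂ) (r : ℝ) :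
    Matrix I I ℂ :=
  if hA : A.IsHermitian then
    (Matrix.IsHermitian.eigenvectorUnitary hA : Matrix I I ℂ) *
      Matrix.diagonal (fun i => ((hA.eigenvalues i ^ r : ℝ) : ℂ)) *
      (Matrix.IsHermitian.eigenvectorUnitary hA : Matrix I I ℂ)ᴴ
  else 0

/-- The Schatten `p`-norm `‖A‖_p = (Tr[|A|^p])^{1/p}`. -/
def schatten {I : Type*} [Fintype I] [DecidableEq I] (p : ℝ) (A : Matrix I I ℂ) : ℝ :=
  ((mpow (matAbs A) p).trace).re ^ (1 / p)

/-- The spectral norm of a matrix: the largest singular value. -/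
def specNorm {I : Type*} [Fintype I] [DecidableEq I] (A : Matrix I I ℂ) : ℝ :=
  ⨆ i, Real.sqrt ((Matrix.posSemidef_conjTranspose_mul_self A).isHermitian.eigenvalues i)

/-- Partial trace over the second tensor factor. -/
def ptraceB {I J : Type*} [Fintype J] (M : Matrix (I × J) (I × J) ℂ) : Matrix I I ℂ :=
  Matrix.of fun i j => ∑ b : J, M (i, b) (j, b)

/-- A linear map between matrix algebras is completely positive if all its ampliations
`id_m ⊗ L` preserve positive semidefiniteness. -/
def IsCompletelyPositive {I J : Type*} [Fintype I] [DecidableEq I] [Fintype J]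
    (L : Matrix I I ℂ →ₗ[ℂ] Matrix J J ℂ) : Prop :=
  ∀ (m : ℕ) (M : Matrix (Fin m × I) (Fin m × I) ℂ), M.PosSemidef →
    (lmTensor (id : Matrix (Fin m) (Fin m) ℂ → Matrix (Fin m) (Fin m) ℂ) (⇑L) M).PosSemidef

/-!
Diagonalise `A = U diag(λ) U*` and `B = V diag(μ) V*`. Then `Re Tr[AB] = ∑_{j,k} λ_j μ_k |W_{jk}|²`
with `W = U*V` unitary, so the weights `|W_{jk}|²` form a doubly stochastic matrix, and Hölder's
inequality over the pairs `(j, k)` gives `Re Tr[AB] ≤ (Tr A^p)^{1/p} (Tr B^q)^{1/q}`. Summing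
over `i` and applying Hölder once more to the sequences `(Tr A_i^p)^{1/p}` and `(Tr B_i^q)^{1/q}`
gives the inequality for sequences.
-/

namespace Real

open Finset

theorem inner_le_Lp_mul_Lq_of_mem_doublyStochastic {n : Type*} [Fintype n] [DecidableEq n]
    {S : Matrix n n ℝ} (hS : S ∈ doublyStochastic ℝ n) {a b : n → ℝ}
    (ha : ∀ j, 0 ≤ a j) (hb : ∀ k, 0 ≤ b k) {p q : ℝ} (hpq : p.HolderConjugate q) :
    ∑ j, ∑ k, a j * b k * S j k ≤ (∑ j, a j ^ p) ^ (1 / p) * (∑ k, b k ^ q) ^ (1 / q) := by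
  have hS0 : ∀ j k, 0 ≤ S j k := fun j k => nonneg_of_mem_doublyStochastic hS
  -- split the weight as `S = S ^ (1/p) * S ^ (1/q)` and apply Hölder over pairs `(j, k)`
  have holder := inner_le_Lp_mul_Lq_of_nonneg (univ : Finset (n × n)) hpq
    (f := fun jk => a jk.1 * S jk.1 jk.2 ^ (1 / p)) (g := fun jk => b jk.2 * S jk.1 jk.2 ^ (1 / q))
    (fun jk _ => by have := ha jk.1; have := hS0 jk.1 jk.2; positivity)
    (fun jk _ => by have := hb jk.2; have := hS0 jk.1 jk.2; positivity)
  have weight_rpow : ∀ j k {r : ℝ}, r ≠ 0 → (S j k ^ (1 / r)) ^ r = S j k := fun j k r hr => by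
    rw [← rpow_mul (hS0 j k), one_div_mul_cancel hr, rpow_one]
  simp only [Fintype.sum_prod_type, mul_rpow (ha _) (rpow_nonneg (hS0 _ _) _),
    mul_rpow (hb _) (rpow_nonneg (hS0 _ _) _), weight_rpow _ _ hpq.ne_zero,
    weight_rpow _ _ hpq.symm.ne_zero, ← mul_sum, sum_row_of_mem_doublyStochastic hS] at holder
  rw [sum_comm (f := fun j k => b k ^ q * S j k)] at holder
  simp only [← mul_sum, sum_col_of_mem_doublyStochastic hS, mul_one] at holder
  convert holder using 3 with j _ k
  rw [mul_mul_mul_comm, ← rpow_add_of_nonneg (hS0 j k) (by simp [hpq.nonneg])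
    (by simp [hpq.symm.nonneg]), hpq.one_div_add_one_div, div_one, rpow_one]

theorem sum_rpow_mul_rpow_le {ι : Type*} (s : Finset ι) {x y : ι → ℝ}
    (hx : ∀ i ∈ s, 0 ≤ x i) (hy : ∀ i ∈ s, 0 ≤ y i) {p q : ℝ} (hpq : p.HolderConjugate q) :
    ∑ i ∈ s, x i ^ (1 / p) * y i ^ (1 / q) ≤
      (∑ i ∈ s, x i) ^ (1 / p) * (∑ i ∈ s, y i) ^ (1 / q) := by
  have holder := inner_le_Lp_mul_Lq_of_nonneg s hpq
    (fun i hi => rpow_nonneg (hx i hi) (1 / p)) (fun i hi => rpow_nonneg (hy i hi) (1 / q))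
  convert holder using 3 <;> refine sum_congr rfl fun i hi => ?_
  · rw [← rpow_mul (hx i hi), one_div_mul_cancel hpq.ne_zero, rpow_one]
  · rw [← rpow_mul (hy i hi), one_div_mul_cancel hpq.symm.ne_zero, rpow_one]

end Real

namespace Matrix

variable {n : Type*} [Fintype n] [DecidableEq n]

theorem IsHermitian.re_trace_mpow {A : Matrix n n ℂ} (hA : A.IsHermitian) (r : ℝ) :
    (mpow A r).trace.re = ∑ j, hA.eigenvalues j ^ r := by
  rw [mpow, dif_pos hA, trace_mul_cycle, ← star_eq_conjTranspose, Unitary.coe_star_mul_self,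
    one_mul, trace_diagonal, Complex.re_sum]
  simp only [Complex.ofReal_re]

theorem normSq_apply_mem_doublyStochastic {U : Matrix n n ℂ} (hU : U ∈ unitaryGroup n ℂ) :
    (of fun j k => Complex.normSq (U j k)) ∈ doublyStochastic ℝ n := by
  refine mem_doublyStochastic_iff_sum.mpr
    ⟨fun j k => Complex.normSq_nonneg _, fun j => ?_, fun k => ?_⟩
  · have := congrArg (fun M : Matrix n n ℂ => (M j j).re) (Unitary.mul_star_self_of_mem hU)
    simpa [mul_apply, Complex.mul_conj, Complex.re_sum] using this
  · have := congrArg (fun M : Matrix n n ℂ => (M k k).re) (Unitary.star_mul_self_of_mem hU)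
    simpa [mul_apply, Complex.re_sum, Complex.normSq_apply, mul_comm] using this

theorem trace_diagonal_mul_mul_diagonal_mul_conjTranspose (a b : n → ℂ) (W : Matrix n n ℂ) :
    (diagonal a * W * diagonal b * Wᴴ).trace = ∑ j, ∑ k, a j * b k * Complex.normSq (W j k) := by
  simp only [trace, diag_apply, mul_apply, diagonal_apply, conjTranspose_apply, ite_mul, zero_mul,
    mul_ite, mul_zero, Finset.sum_ite_eq, Finset.sum_ite_eq', Finset.mem_univ, if_true]
  refine Finset.sum_congr rfl fun j _ => Finset.sum_congr rfl fun k _ => ?_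
  rw [← Complex.mul_conj, ← Complex.star_def]
  ring

theorem IsHermitian.re_trace_mul {A B : Matrix n n ℂ} (hA : A.IsHermitian) (hB : B.IsHermitian) :
    (A * B).trace.re = ∑ j, ∑ k, hA.eigenvalues j * hB.eigenvalues k * Complex.normSq
      ((star (hA.eigenvectorUnitary : Matrix n n ℂ) * hB.eigenvectorUnitary) j k) := by
  set W := star (hA.eigenvectorUnitary : Matrix n n ℂ) * hB.eigenvectorUnitary
  have hAB : (A * B).trace = (diagonal (fun j => (hA.eigenvalues j : ℂ)) * W *
      diagonal (fun k => (hB.eigenvalues k : ℂ)) * Wᴴ).trace := by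
    conv_lhs => rw [hA.spectral_theorem, hB.spectral_theorem]
    simp only [Unitary.conjStarAlgAut_apply, ← star_eq_conjTranspose]
    simp only [Matrix.mul_assoc, Function.comp_def, RCLike.ofReal_eq_complex_ofReal]
    rw [trace_mul_comm]
    simp only [W, star_mul, star_star, Matrix.mul_assoc]
  rw [hAB, trace_diagonal_mul_mul_diagonal_mul_conjTranspose, Complex.re_sum]
  simp only [Complex.re_sum, ← Complex.ofReal_mul, Complex.ofReal_re]

theorem PosSemidef.re_trace_mpow_nonneg {A : Matrix n n ℂ} (hA : A.PosSemidef) (r : ℝ) :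
    0 ≤ (mpow A r).trace.re := by
  rw [hA.1.re_trace_mpow]
  exact Finset.sum_nonneg fun j _ => Real.rpow_nonneg (hA.eigenvalues_nonneg j) r

theorem PosSemidef.re_trace_mul_le {A B : Matrix n n ℂ} (hA : A.PosSemidef) (hB : B.PosSemidef)
    {p q : ℝ} (hpq : p.HolderConjugate q) :
    (A * B).trace.re ≤ (mpow A p).trace.re ^ (1 / p) * (mpow B q).trace.re ^ (1 / q) := by
  rw [hA.1.re_trace_mul hB.1, hA.1.re_trace_mpow, hB.1.re_trace_mpow]
  exact Real.inner_le_Lp_mul_Lq_of_mem_doublyStochastic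
    (normSq_apply_mem_doublyStochastic
      (star hA.1.eigenvectorUnitary * hB.1.eigenvectorUnitary).2)
    hA.eigenvalues_nonneg hB.eigenvalues_nonneg hpq

end Matrix

theorem stmt5_general (d m : ℕ) (A B : Fin m → Matrix (Fin d) (Fin d) ℂ)
    (hA : ∀ i, (A i).PosSemidef) (hB : ∀ i, (B i).PosSemidef)
    (p q : ℝ) (hp : 1 < p) (hpq : 1 / p + 1 / q = 1) :
    ((∑ i, A i * B i).trace).re ≤
      (((∑ i, mpow (A i) p).trace).re) ^ (1 / p) *
        (((∑ i, mpow (B i) q).trace).re) ^ (1 / q) := by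
  have hpq' : p.HolderConjugate q :=
    Real.holderConjugate_iff.mpr ⟨hp, by simpa only [one_div] using hpq⟩
  simp only [trace_sum, Complex.re_sum]
  calc ∑ i, (A i * B i).trace.re
      ≤ ∑ i, (mpow (A i) p).trace.re ^ (1 / p) * (mpow (B i) q).trace.re ^ (1 / q) :=
        Finset.sum_le_sum fun i _ => (hA i).re_trace_mul_le (hB i) hpq'
    _ ≤ (∑ i, (mpow (A i) p).trace.re) ^ (1 / p) * (∑ i, (mpow (B i) q).trace.re) ^ (1 / q) :=
        Real.sum_rpow_mul_rpow_le _ (fun i _ => (hA i).re_trace_mpow_nonneg p)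
          (fun i _ => (hB i).re_trace_mpow_nonneg q) hpq'

/-- Matrix Hölder inequality for sequences of positive semidefinite matrices. -/
theorem stmt5 (d m : ℕ) (A B : Fin m → Matrix (Fin d) (Fin d) ℂ)
    (hA : ∀ i, (A i).PosSemidef) (hB : ∀ i, (B i).PosSemidef)
    (p q : ℝ) (hp : 1 < p) (hq : 1 < q) (hpq : 1 / p + 1 / q = 1) :
    ((∑ i, A i * B i).trace).re ≤
      (((∑ i, mpow (A i) p).trace).re) ^ (1 / p) *
        (((∑ i, mpow (B i) q).trace).re) ^ (1 / q) :=
  stmt5_general d m A B hA hB p q hp hpq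

end
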